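/- arXiv:2602.14223 — 8 statements merged into one kernel-verified Lean document; each statement's English description precedes it below -/
import Mathlib

section
/- Let Σ be a symmetric positive definite n×n real matrix, μ ∈ ℝⁿ with all entries positive, γ ∈ ℝⁿ with all entries positive, γ_R ≥ 0, and k := (μᵀΣ⁻¹μ)⁻¹. Define M̄ := (γ_R + 1/(∑_j γ_j⁻¹)) Σ + k · D(μ²) D(γ) − (k/(∑_j γ_j⁻¹)) μμᵀ, where D(x) denotes the diagonal matrix with diagonal x and μ² is the entrywise square of μ. Then M̄ is positive definite (in particular invertible). -/
/-!
Cauchy–Schwarz for the inner product `⟪u, v⟫ = uᵀ Σ v`, applied to `u = Σ⁻¹ μ`, gives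
`k (μᵀ v)² ≤ vᵀ Σ v`, i.e. `Σ - k μ μᵀ` is positive semidefinite. Writing `c = ∑ j, γ j⁻¹`,
`M̄ = γ_R Σ + c⁻¹ (Σ - k μ μᵀ) + k D(μ² γ)` is then the sum of two positive semidefinite matrices
and a diagonal matrix with positive entries.
-/

open Matrix BigOperators

namespace Matrix.PosDef

variable {ι : Type*} [Fintype ι] [DecidableEq ι] {S : Matrix ι ι ℝ}

theorem sq_dotProduct_le_mul (hS : S.PosDef) (x v : ι → ℝ) :
    (x ⬝ᵥ v) ^ 2 ≤ (x ⬝ᵥ S⁻¹ *ᵥ x) * (v ⬝ᵥ S *ᵥ v) := by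
  set w := S⁻¹ *ᵥ x
  have hSw : S *ᵥ w = x := by
    rw [mulVec_mulVec, mul_nonsing_inv _ ((isUnit_iff_isUnit_det S).mp hS.isUnit), one_mulVec]
  have hwS : w ᵥ* S = x := by
    rw [← hSw, ← vecMul_transpose, ← conjTranspose_eq_transpose_of_trivial, hS.1.eq]
  -- `t ↦ (v + t • w)ᵀ S (v + t • w)` is a nonnegative quadratic, so its discriminant is `≤ 0`.
  have hquad : ∀ t : ℝ, 0 ≤ (x ⬝ᵥ w) * (t * t) + 2 * (x ⬝ᵥ v) * t + v ⬝ᵥ S *ᵥ v := by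
    intro t
    have := hS.posSemidef.dotProduct_mulVec_nonneg (v + t • w)
    rw [star_trivial, mulVec_add, mulVec_smul, hSw, dotProduct_add, add_dotProduct,
      add_dotProduct, smul_dotProduct, smul_dotProduct, dotProduct_mulVec w, hwS] at this
    simp only [dotProduct_smul, smul_eq_mul, dotProduct_comm w x, dotProduct_comm v x] at this
    linarith
  have := discrim_le_zero hquad
  rw [discrim] at this
  linarith

theorem posSemidef_sub_smul_vecMulVec (hS : S.PosDef) (x : ι → ℝ) :
    (S - (x ⬝ᵥ S⁻¹ *ᵥ x)⁻¹ • vecMulVec x x).PosSemidef := by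
  refine PosSemidef.of_dotProduct_mulVec_nonneg ?_ fun v => ?_
  · have hx : (vecMulVec x x).IsHermitian := by
      simpa using (posSemidef_vecMulVec_self_star x).isHermitian
    exact hS.1.sub (hx.smul (.all _))
  · have ha : 0 ≤ x ⬝ᵥ S⁻¹ *ᵥ x := by simpa using hS.inv.posSemidef.dotProduct_mulVec_nonneg x
    have hquad : v ⬝ᵥ vecMulVec x x *ᵥ v = (x ⬝ᵥ v) ^ 2 := by
      rw [vecMulVec_mulVec]; simp [sq, dotProduct_comm]
    rw [star_trivial, sub_mulVec, smul_mulVec, dotProduct_sub, dotProduct_smul, hquad, smul_eq_mul,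
      sub_nonneg]
    calc (x ⬝ᵥ S⁻¹ *ᵥ x)⁻¹ * (x ⬝ᵥ v) ^ 2
        ≤ (x ⬝ᵥ S⁻¹ *ᵥ x)⁻¹ * ((x ⬝ᵥ S⁻¹ *ᵥ x) * (v ⬝ᵥ S *ᵥ v)) := by
          gcongr; exact hS.sq_dotProduct_le_mul x v
      _ ≤ v ⬝ᵥ S *ᵥ v := by
          rw [← mul_assoc]
          exact mul_le_of_le_one_left (by simpa using hS.posSemidef.dotProduct_mulVec_nonneg v)
            (inv_mul_le_one_of_le₀ le_rfl ha)

end Matrix.PosDef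

theorem stmt1 {n : ℕ} (S : Matrix (Fin n) (Fin n) ℝ) (hS : S.PosDef)
    (μ γ : Fin n → ℝ) (hμ : ∀ i, 0 < μ i) (hγ : ∀ i, 0 < γ i)
    (γR k : ℝ) (hγR : 0 ≤ γR) (hk : k = (μ ⬝ᵥ S⁻¹.mulVec μ)⁻¹) :
    ((γR + (∑ j, (γ j)⁻¹)⁻¹) • S
      + k • (Matrix.diagonal (fun i => (μ i) ^ 2) * Matrix.diagonal γ)
      - (k / (∑ j, (γ j)⁻¹)) • Matrix.vecMulVec μ μ).PosDef := by
  set c := ∑ j, (γ j)⁻¹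
  have hc : 0 ≤ c⁻¹ := inv_nonneg.2 <| Finset.sum_nonneg fun j _ => (inv_pos.2 (hγ j)).le
  -- For `n = 0` we would have `k = 0⁻¹ = 0`; an index `i` excludes that case.
  have hk_pos (i : Fin n) : 0 < k := by
    have hμ0 : μ ≠ 0 := fun h => (hμ i).ne' (congrFun h i)
    simpa [hk] using hS.inv.dotProduct_mulVec_pos hμ0
  have hSk : (S - k • vecMulVec μ μ).PosSemidef := hk ▸ hS.posSemidef_sub_smul_vecMulVec μ
  have hdecomp : (γR + c⁻¹) • S + k • (diagonal (fun i => μ i ^ 2) * diagonal γ)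
        - (k / c) • vecMulVec μ μ
      = γR • S + c⁻¹ • (S - k • vecMulVec μ μ) + diagonal (k • fun i => μ i ^ 2 * γ i) := by
    rw [diagonal_mul_diagonal, diagonal_smul]
    module
  rw [hdecomp]
  refine PosDef.posSemidef_add ((hS.posSemidef.smul hγR).add (hSk.smul hc)) ?_
  exact .diagonal fun i => mul_pos (hk_pos i) (mul_pos (pow_pos (hμ i) 2) (hγ i))
end

section
/- With notation as in the previous statement, the matrix M := (1/(∑_j γ_j⁻¹)) Σ + k D(μ²) D(γ) − (k/(∑_j γ_j⁻¹)) μμᵀ (that is, M̄ with γ_R set to 0, equivalently M = M̄ − γ_R Σ) is positive definite and hence invertible. -/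
/-!
With `s = ∑ⱼ γⱼ⁻¹` the matrix splits as `M = s⁻¹ • Σ + k • (D(μ² γ) - s⁻¹ • μ μᵀ)`. The bracket is
positive semidefinite by Cauchy–Schwarz in Sedrakyan's form,
`(∑ μᵢ xᵢ)² / ∑ γᵢ⁻¹ ≤ ∑ (μᵢ xᵢ)² γᵢ`, and `k ≥ 0` because `Σ⁻¹` is positive definite, so `M` is a
positive multiple of `Σ` plus a positive semidefinite matrix.
-/

open Matrix BigOperators

variable {ι : Type*} [Fintype ι]

theorem sq_dotProduct_div_sum_inv_le (μ γ x : ι → ℝ) (hγ : ∀ i, 0 < γ i) :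
    (μ ⬝ᵥ x) ^ 2 / ∑ i, (γ i)⁻¹ ≤ ∑ i, μ i ^ 2 * γ i * x i ^ 2 :=
  calc (μ ⬝ᵥ x) ^ 2 / ∑ i, (γ i)⁻¹ ≤ ∑ i, (μ i * x i) ^ 2 / (γ i)⁻¹ :=
        Finset.sq_sum_div_le_sum_sq_div _ _ fun i _ => inv_pos.mpr (hγ i)
    _ = ∑ i, μ i ^ 2 * γ i * x i ^ 2 :=
        Finset.sum_congr rfl fun i _ => by rw [div_inv_eq_mul]; ring

theorem posSemidef_diagonal_sub_smul_vecMulVec [DecidableEq ι] (μ γ : ι → ℝ)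
    (hγ : ∀ i, 0 < γ i) :
    (diagonal (fun i => μ i ^ 2 * γ i) - (∑ i, (γ i)⁻¹)⁻¹ • vecMulVec μ μ).PosSemidef := by
  have hV : (vecMulVec μ μ).IsHermitian := by
    simpa using (posSemidef_vecMulVec_self_star μ).isHermitian
  refine .of_dotProduct_mulVec_nonneg ((isHermitian_diagonal _).sub (hV.smul (.all _)))
    fun x => ?_
  have quadratic_form : star x ⬝ᵥ ((diagonal (fun i => μ i ^ 2 * γ i)
      - (∑ i, (γ i)⁻¹)⁻¹ • vecMulVec μ μ) *ᵥ x)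
      = ∑ i, μ i ^ 2 * γ i * x i ^ 2 - (μ ⬝ᵥ x) ^ 2 / ∑ i, (γ i)⁻¹ := by
    simp only [star_trivial, sub_mulVec, smul_mulVec, vecMulVec_mulVec, op_smul_eq_smul,
      dotProduct_sub, dotProduct_smul, smul_eq_mul, dotProduct_comm x μ]
    congr 1
    · exact Finset.sum_congr rfl fun i _ => by rw [mulVec_diagonal]; ring
    · ring
  rw [quadratic_form, sub_nonneg]
  exact sq_dotProduct_div_sum_inv_le μ γ x hγ

theorem stmt2_general {n : ℕ} (S : Matrix (Fin n) (Fin n) ℝ) (hS : S.PosDef)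
    (μ γ : Fin n → ℝ) (hγ : ∀ i, 0 < γ i)
    (k : ℝ) (hk : k = (μ ⬝ᵥ S⁻¹.mulVec μ)⁻¹)
    (M : Matrix (Fin n) (Fin n) ℝ)
    (hM : M = (∑ j, (γ j)⁻¹)⁻¹ • S
      + k • (Matrix.diagonal (fun i => (μ i) ^ 2) * Matrix.diagonal γ)
      - (k / (∑ j, (γ j)⁻¹)) • Matrix.vecMulVec μ μ) :
    M.PosDef ∧ IsUnit M.det := by
  have hM_posDef : M.PosDef := by
    rcases isEmpty_or_nonempty (Fin n) with hn | hn
    · exact Subsingleton.elim S M ▸ hS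
    have hs : 0 < ∑ j, (γ j)⁻¹ :=
      Finset.sum_pos (fun j _ => inv_pos.mpr (hγ j)) Finset.univ_nonempty
    have hk_nonneg : 0 ≤ k :=
      hk ▸ inv_nonneg.mpr (by simpa using hS.inv.posSemidef.dotProduct_mulVec_nonneg μ)
    have hM_split : M = (∑ j, (γ j)⁻¹)⁻¹ • S + k • (diagonal (fun i => μ i ^ 2 * γ i)
        - (∑ j, (γ j)⁻¹)⁻¹ • vecMulVec μ μ) := by
      rw [hM, diagonal_mul_diagonal, smul_sub, smul_smul, div_eq_mul_inv, add_sub_assoc]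
    rw [hM_split]
    exact (hS.smul (inv_pos.mpr hs)).add_posSemidef
      ((posSemidef_diagonal_sub_smul_vecMulVec μ γ hγ).smul hk_nonneg)
  exact ⟨hM_posDef, (isUnit_iff_isUnit_det M).mp hM_posDef.isUnit⟩

theorem stmt2 {n : ℕ} (S : Matrix (Fin n) (Fin n) ℝ) (hS : S.PosDef)
    (μ γ : Fin n → ℝ) (hμ : ∀ i, 0 < μ i) (hγ : ∀ i, 0 < γ i)
    (k : ℝ) (hk : k = (μ ⬝ᵥ S⁻¹.mulVec μ)⁻¹)
    (M : Matrix (Fin n) (Fin n) ℝ)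
    (hM : M = (∑ j, (γ j)⁻¹)⁻¹ • S
      + k • (Matrix.diagonal (fun i => (μ i) ^ 2) * Matrix.diagonal γ)
      - (k / (∑ j, (γ j)⁻¹)) • Matrix.vecMulVec μ μ) :
    M.PosDef ∧ IsUnit M.det :=
  stmt2_general S hS μ γ hγ k hk M hM
end

section
/- Let M and Σ be symmetric n×n real matrices with M positive definite and Σ positive semidefinite, and γ_R ≥ 0. Then (γ_R M⁻¹Σ + I)ᵀ M (γ_R M⁻¹Σ + 2I)⁻¹ (γ_R M⁻¹Σ + I) − γ_R Σ = (γ_R M⁻¹ Σ M⁻¹ + 2M⁻¹)⁻¹. -/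
open Matrix BigOperators

theorem stmt4 {n : ℕ} (M S : Matrix (Fin n) (Fin n) ℝ) (hM : M.PosDef) (hS : S.PosSemidef)
    (γR : ℝ) (hγR : 0 ≤ γR) :
    (γR • (M⁻¹ * S) + 1)ᵀ * M * (γR • (M⁻¹ * S) + (2 : ℝ) • (1 : Matrix (Fin n) (Fin n) ℝ))⁻¹
        * (γR • (M⁻¹ * S) + 1) - γR • S
      = (γR • (M⁻¹ * S * M⁻¹) + (2 : ℝ) • M⁻¹)⁻¹ := by
  have hMdet : IsUnit M.det := hM.det_pos.ne'.isUnit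
  have hSsmul : (γR • S).PosSemidef := by
    refine posSemidef_iff_dotProduct_mulVec.mpr ⟨?_, fun x => ?_⟩
    · show (γR • S)ᴴ = _
      simp only [conjTranspose_smul, hS.1.eq, star_trivial]
    · show 0 ≤ star x ⬝ᵥ (γR • S) *ᵥ x
      rw [smul_mulVec, dotProduct_smul]
      exact mul_nonneg hγR (hS.dotProduct_mulVec_nonneg x)
  have h2M : ((2:ℝ) • M).PosDef := by
    refine posDef_iff_dotProduct_mulVec.mpr ⟨?_, fun x hx => ?_⟩
    · show ((2:ℝ) • M)ᴴ = _
      simp only [conjTranspose_smul, hM.1.eq, star_trivial]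
    · rw [smul_mulVec, dotProduct_smul]
      exact mul_pos (by norm_num) ((posDef_iff_dotProduct_mulVec.mp hM).2 hx)
  set C := γR • S + (2 : ℝ) • M with hCdef
  have hC : C.PosDef := Matrix.PosDef.posSemidef_add hSsmul h2M
  have hCdet : IsUnit C.det := hC.det_pos.ne'.isUnit
  have hMi : M⁻¹ * M = 1 := nonsing_inv_mul M hMdet
  have hMi' : M * M⁻¹ = 1 := mul_nonsing_inv M hMdet
  have hCi : C⁻¹ * C = 1 := nonsing_inv_mul C hCdet
  have hCi' : C * C⁻¹ = 1 := mul_nonsing_inv C hCdet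
  have hMsymm : Mᵀ = M := by simpa using hM.1.eq
  have hSsymm : Sᵀ = S := by simpa using hS.1.eq
  have hMisymm : (M⁻¹)ᵀ = M⁻¹ := by rw [Matrix.transpose_nonsing_inv, hMsymm]
  -- B = M⁻¹ * C
  have hB : γR • (M⁻¹ * S) + (2:ℝ) • (1 : Matrix (Fin n) (Fin n) ℝ) = M⁻¹ * C := by
    rw [hCdef, Matrix.mul_add, Matrix.mul_smul, Matrix.mul_smul, hMi]
  have hBinv : (γR • (M⁻¹ * S) + (2:ℝ) • (1 : Matrix (Fin n) (Fin n) ℝ))⁻¹ = C⁻¹ * M := by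
    rw [hB, Matrix.mul_inv_rev, Matrix.nonsing_inv_nonsing_inv M hMdet]
  -- transpose
  have hT : (γR • (M⁻¹ * S) + 1)ᵀ = γR • (S * M⁻¹) + 1 := by
    rw [transpose_add, transpose_smul, transpose_mul, hSsymm, hMisymm, transpose_one]
  -- RHS
  have hR : γR • (M⁻¹ * S * M⁻¹) + (2:ℝ) • M⁻¹ = M⁻¹ * C * M⁻¹ := by
    rw [hCdef, Matrix.mul_add, Matrix.mul_smul, Matrix.mul_smul, hMi, Matrix.add_mul,
      Matrix.smul_mul, Matrix.smul_mul, Matrix.one_mul]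
  have hRinv : (γR • (M⁻¹ * S * M⁻¹) + (2:ℝ) • M⁻¹)⁻¹ = M * C⁻¹ * M := by
    rw [hR, Matrix.mul_inv_rev, Matrix.mul_inv_rev, Matrix.nonsing_inv_nonsing_inv M hMdet,
      Matrix.mul_assoc]
  rw [hT, hBinv, hRinv]
  have h1 : (γR • (S * M⁻¹) + 1) * M = γR • S + M := by
    rw [Matrix.add_mul, Matrix.smul_mul, Matrix.one_mul, Matrix.mul_assoc, hMi,
      Matrix.mul_one]
  have h2 : M * (γR • (M⁻¹ * S) + 1) = γR • S + M := by
    rw [Matrix.mul_add, Matrix.mul_smul, Matrix.mul_one, ← Matrix.mul_assoc, hMi',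
      Matrix.one_mul]
  have hD : γR • S + M = C - M := by
    rw [hCdef]; module
  have key : (γR • (S * M⁻¹) + 1) * M * (C⁻¹ * M) * (γR • (M⁻¹ * S) + 1)
      = γR • S + M * C⁻¹ * M := by
    have e1 : (γR • (S * M⁻¹) + 1) * M * (C⁻¹ * M) * (γR • (M⁻¹ * S) + 1)
        = ((γR • (S * M⁻¹) + 1) * M) * C⁻¹ * (M * (γR • (M⁻¹ * S) + 1)) := by
      simp only [Matrix.mul_assoc]
    rw [e1, h1, h2, hD, Matrix.sub_mul, hCi', Matrix.sub_mul, Matrix.one_mul,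
      Matrix.mul_sub, Matrix.mul_assoc M C⁻¹ C, hCi, Matrix.mul_one, hCdef]
    module
  rw [key]
  abel
end

section
/- Let A be an n×n real matrix that is strictly diagonally dominant with δ := min_i (A_{ii} − ∑_{j≠i} |A_{ij}|) > 0 and positive diagonal entries. Then A is invertible and ‖A⁻¹‖_∞ ≤ 1/δ, where ‖·‖_∞ is the operator norm induced by the sup-norm on ℝⁿ (the Varah bound). -/
open Matrix BigOperators

private lemma varah_key {n : ℕ} (A : Matrix (Fin n) (Fin n) ℝ)
    (hne : (Finset.univ : Finset (Fin n)).Nonempty) (δ : ℝ)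
    (hδ : δ = Finset.univ.inf' hne (fun i => A i i - ∑ j ∈ Finset.univ.erase i, |A i j|))
    (hdiag : ∀ i, 0 < A i i) (x : Fin n → ℝ) :
    ∃ i, |x i| = Finset.univ.sup' hne (fun j => |x j|) ∧
      δ * Finset.univ.sup' hne (fun j => |x j|) ≤ |A.mulVec x i| := by
  obtain ⟨i, -, hi⟩ := Finset.exists_mem_eq_sup' hne (fun j => |x j|)
  set M := Finset.univ.sup' hne (fun j => |x j|) with hMdef
  have hM0 : 0 ≤ M := hi ▸ abs_nonneg _
  have hMle : ∀ j, |x j| ≤ M := fun j => Finset.le_sup' (fun j => |x j|) (Finset.mem_univ j)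
  refine ⟨i, hi.symm, ?_⟩
  set S := ∑ j ∈ Finset.univ.erase i, |A i j| with hS
  have h1 : δ ≤ A i i - S := hδ ▸ Finset.inf'_le _ (Finset.mem_univ i)
  have hsplit : A.mulVec x i = A i i * x i + ∑ j ∈ Finset.univ.erase i, A i j * x j := by
    rw [Matrix.mulVec, dotProduct, ← Finset.sum_erase_add _ _ (Finset.mem_univ i)]
    ring
  have h2 : |∑ j ∈ Finset.univ.erase i, A i j * x j| ≤ S * M := by
    calc |∑ j ∈ Finset.univ.erase i, A i j * x j|
        ≤ ∑ j ∈ Finset.univ.erase i, |A i j * x j| := Finset.abs_sum_le_sum_abs _ _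
      _ ≤ ∑ j ∈ Finset.univ.erase i, |A i j| * M := by
          refine Finset.sum_le_sum fun j _ => ?_
          rw [abs_mul]
          exact mul_le_mul_of_nonneg_left (hMle j) (abs_nonneg _)
      _ = S * M := by rw [hS, Finset.sum_mul]
  have h3 : |A i i * x i| = A i i * M := by
    rw [abs_mul, abs_of_pos (hdiag i), ← hi]
  have h4 : |A i i * x i| - |∑ j ∈ Finset.univ.erase i, A i j * x j|
      ≤ |A.mulVec x i| := by
    rw [hsplit]
    have := abs_add_le (A i i * x i + ∑ j ∈ Finset.univ.erase i, A i j * x j)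
      (-(∑ j ∈ Finset.univ.erase i, A i j * x j))
    simp only [add_neg_cancel_right, abs_neg] at this
    linarith
  nlinarith [mul_le_mul_of_nonneg_right h1 hM0]

theorem stmt6 {n : ℕ} (A : Matrix (Fin n) (Fin n) ℝ)
    (hne : (Finset.univ : Finset (Fin n)).Nonempty) (δ : ℝ)
    (hδ : δ = Finset.univ.inf' hne (fun i => A i i - ∑ j ∈ Finset.univ.erase i, |A i j|))
    (hδpos : 0 < δ) (hdiag : ∀ i, 0 < A i i) :
    IsUnit A.det ∧ ∀ i, ∑ j, |A⁻¹ i j| ≤ 1 / δ := by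
  have hdet : IsUnit A.det := by
    by_contra h
    have hdet0 : A.det = 0 := by
      rcases eq_or_ne A.det 0 with h0 | h0
      · exact h0
      · exact absurd (isUnit_iff_ne_zero.mpr h0) h
    obtain ⟨v, hv, hAv⟩ := (Matrix.exists_mulVec_eq_zero_iff.mpr hdet0)
    obtain ⟨i, hieq, hile⟩ := varah_key A hne δ hδ hdiag v
    rw [hAv] at hile
    simp only [Pi.zero_apply, abs_zero] at hile
    have hM0 : 0 < Finset.univ.sup' hne (fun j => |v j|) := by
      obtain ⟨k, hk⟩ := Function.ne_iff.mp hv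
      have : 0 < |v k| := abs_pos.mpr hk
      exact lt_of_lt_of_le this (Finset.le_sup' (fun j => |v j|) (Finset.mem_univ k))
    nlinarith
  refine ⟨hdet, fun i => ?_⟩
  set y : Fin n → ℝ := fun j => if 0 ≤ A⁻¹ i j then 1 else -1 with hy
  have hy1 : ∀ j, |y j| ≤ 1 := by
    intro j
    by_cases h : 0 ≤ A⁻¹ i j <;> simp [hy, h]
  set x : Fin n → ℝ := A⁻¹.mulVec y with hx
  have hxi : x i = ∑ j, |A⁻¹ i j| := by
    rw [hx, Matrix.mulVec, dotProduct]
    refine Finset.sum_congr rfl fun j _ => ?_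
    by_cases h : 0 ≤ A⁻¹ i j
    · simp [hy, h, abs_of_nonneg h]
    · push_neg at h
      simp [hy, not_le.mpr h, abs_of_neg h]
  have hAx : A.mulVec x = y := by
    rw [hx, Matrix.mulVec_mulVec, Matrix.mul_nonsing_inv A hdet, Matrix.one_mulVec]
  obtain ⟨k, hkeq, hkle⟩ := varah_key A hne δ hδ hdiag x
  rw [hAx] at hkle
  have hMle : Finset.univ.sup' hne (fun j => |x j|) ≤ 1 / δ := by
    rw [le_div_iff₀ hδpos]
    calc Finset.univ.sup' hne (fun j => |x j|) * δ
        = δ * Finset.univ.sup' hne (fun j => |x j|) := mul_comm _ _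
      _ ≤ |y k| := hkle
      _ ≤ 1 := hy1 k
  calc ∑ j, |A⁻¹ i j| = x i := hxi.symm
    _ ≤ |x i| := le_abs_self _
    _ ≤ Finset.univ.sup' hne (fun j => |x j|) := Finset.le_sup' (fun j => |x j|) (Finset.mem_univ i)
    _ ≤ 1 / δ := hMle
end

section
/- Let M and Σ be symmetric n×n real matrices, both strictly diagonally dominant with dominance gaps δ_M := min_i (M_{ii} − ∑_{j≠i}|M_{ij}|) > 0 and δ_Σ := min_i (Σ_{ii} − ∑_{j≠i}|Σ_{ij}|) > 0, and let γ_R > 0. Suppose δ_M + (γ_R/2)δ_Σ ≥ γ_R² ‖Σ‖_∞² / (2(2δ_M + γ_R δ_Σ)). Then the vector B·1 is entrywise nonnegative, where B := M + (γ_R/2)Σ − (γ_R²/2) Σ(γ_R Σ + 2M)⁻¹Σ and 1 is the all-ones vector. -/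
open Matrix BigOperators

lemma varah_bound {n : ℕ} (A : Matrix (Fin n) (Fin n) ℝ) (d : ℝ)
    (hA : ∀ i, d ≤ A i i - ∑ j ∈ Finset.univ.erase i, |A i j|)
    (x : Fin n → ℝ) (c : ℝ) (hc : ∀ j, |(A.mulVec x) j| ≤ c) (hd : 0 ≤ d) :
    ∀ i, d * |x i| ≤ c := by
  intro i
  obtain ⟨i0, -, hmax⟩ := Finset.exists_max_image Finset.univ (fun j => |x j|) ⟨i, Finset.mem_univ i⟩
  have hxle : ∀ j, |x j| ≤ |x i0| := fun j => hmax j (Finset.mem_univ j)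
  have key : d * |x i0| ≤ |(A.mulVec x) i0| := by
    have hsplit : (A.mulVec x) i0 = A i0 i0 * x i0 + ∑ j ∈ Finset.univ.erase i0, A i0 j * x j := by
      rw [Matrix.mulVec, dotProduct, ← Finset.add_sum_erase _ _ (Finset.mem_univ i0)]
    have h1 : |A i0 i0 * x i0| - |∑ j ∈ Finset.univ.erase i0, A i0 j * x j|
        ≤ |(A.mulVec x) i0| := by
      rw [hsplit]
      have habs : ∀ a b : ℝ, |a| - |b| ≤ |a + b| := fun a b => by
        have h := abs_add_le (a + b) (-b)
        rw [add_neg_cancel_right, abs_neg] at h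
        linarith
      exact habs _ _
    have h2 : |∑ j ∈ Finset.univ.erase i0, A i0 j * x j|
        ≤ (∑ j ∈ Finset.univ.erase i0, |A i0 j|) * |x i0| := by
      calc |∑ j ∈ Finset.univ.erase i0, A i0 j * x j|
          ≤ ∑ j ∈ Finset.univ.erase i0, |A i0 j * x j| := Finset.abs_sum_le_sum_abs _ _
        _ ≤ ∑ j ∈ Finset.univ.erase i0, |A i0 j| * |x i0| := by
            refine Finset.sum_le_sum fun j _ => ?_
            rw [abs_mul]
            exact mul_le_mul_of_nonneg_left (hxle j) (abs_nonneg _)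
        _ = (∑ j ∈ Finset.univ.erase i0, |A i0 j|) * |x i0| := (Finset.sum_mul _ _ _).symm
    have h3 : d * |x i0| ≤ |A i0 i0 * x i0| - (∑ j ∈ Finset.univ.erase i0, |A i0 j|) * |x i0| := by
      rw [abs_mul]
      have := hA i0
      nlinarith [abs_nonneg (x i0), le_abs_self (A i0 i0),
        Finset.sum_nonneg (fun j (_ : j ∈ Finset.univ.erase i0) => abs_nonneg (A i0 j))]
    linarith
  calc d * |x i| ≤ d * |x i0| := mul_le_mul_of_nonneg_left (hxle i) hd
    _ ≤ |(A.mulVec x) i0| := key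
    _ ≤ c := hc i0
theorem stmt7 {n : ℕ} (M S : Matrix (Fin n) (Fin n) ℝ)
    (hMsymm : M.IsSymm) (hSsymm : S.IsSymm)
    (hne : (Finset.univ : Finset (Fin n)).Nonempty) (δM δS : ℝ)
    (hδM : δM = Finset.univ.inf' hne (fun i => M i i - ∑ j ∈ Finset.univ.erase i, |M i j|))
    (hδS : δS = Finset.univ.inf' hne (fun i => S i i - ∑ j ∈ Finset.univ.erase i, |S i j|))
    (hδMpos : 0 < δM) (hδSpos : 0 < δS)
    (γR : ℝ) (hγR : 0 < γR)
    (hcond : γR ^ 2 * (Finset.univ.sup' hne (fun i => ∑ j, |S i j|)) ^ 2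
        / (2 * (2 * δM + γR * δS)) ≤ δM + (γR / 2) * δS) :
    ∀ i, 0 ≤ ((M + (γR / 2) • S
      - (γR ^ 2 / 2) • (S * (γR • S + (2 : ℝ) • M)⁻¹ * S)).mulVec 1) i := by
  intro i
  set A : Matrix (Fin n) (Fin n) ℝ := γR • S + (2 : ℝ) • M with hA
  set d : ℝ := 2 * δM + γR * δS with hdDef
  set s : ℝ := Finset.univ.sup' hne (fun i => ∑ j, |S i j|) with hsDef
  have hdpos : 0 < d := by positivity
  -- gaps for M and S at each row
  have hgapM : ∀ k, δM ≤ M k k - ∑ j ∈ Finset.univ.erase k, |M k j| := fun k => by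
    rw [hδM]; exact Finset.inf'_le _ (Finset.mem_univ k)
  have hgapS : ∀ k, δS ≤ S k k - ∑ j ∈ Finset.univ.erase k, |S k j| := fun k => by
    rw [hδS]; exact Finset.inf'_le _ (Finset.mem_univ k)
  -- gap for A
  have hgapA : ∀ k, d ≤ A k k - ∑ j ∈ Finset.univ.erase k, |A k j| := by
    intro k
    have hAkk : A k k = γR * S k k + 2 * M k k := by simp [hA]
    have hsum : ∑ j ∈ Finset.univ.erase k, |A k j|
        ≤ γR * ∑ j ∈ Finset.univ.erase k, |S k j| + 2 * ∑ j ∈ Finset.univ.erase k, |M k j| := by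
      rw [Finset.mul_sum, Finset.mul_sum, ← Finset.sum_add_distrib]
      refine Finset.sum_le_sum fun j _ => ?_
      have : A k j = γR * S k j + 2 * M k j := by simp [hA]
      rw [this]
      calc |γR * S k j + 2 * M k j| ≤ |γR * S k j| + |2 * M k j| := abs_add_le _ _
        _ = γR * |S k j| + 2 * |M k j| := by
            rw [abs_mul, abs_mul, abs_of_pos hγR, abs_of_pos (by norm_num : (0:ℝ) < 2)]
    have h1 := hgapM k
    have h2 := hgapS k
    rw [hAkk]; nlinarith
  -- invertibility of A
  have hdet : IsUnit A.det := by
    rw [isUnit_iff_ne_zero]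
    apply det_ne_zero_of_sum_row_lt_diag
    intro k
    have hgap := hgapA k
    have hsumnn : 0 ≤ ∑ j ∈ Finset.univ.erase k, |A k j| :=
      Finset.sum_nonneg fun j _ => abs_nonneg _
    have hAkk : 0 < A k k := by linarith
    simp only [Real.norm_eq_abs]
    rw [abs_of_pos hAkk]
    linarith
  -- x := A⁻¹ (S 1)
  set y : Fin n → ℝ := S.mulVec 1 with hy
  set x : Fin n → ℝ := A⁻¹.mulVec y with hx
  have hAx : A.mulVec x = y := by
    rw [hx, Matrix.mulVec_mulVec, Matrix.mul_nonsing_inv _ hdet, Matrix.one_mulVec]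
  -- bounds
  have hsnn : 0 ≤ s := by
    rw [hsDef]
    obtain ⟨k, hk⟩ := hne
    exact le_trans (Finset.sum_nonneg fun j _ => abs_nonneg (S k j))
      (Finset.le_sup' (fun i => ∑ j, |S i j|) (Finset.mem_univ k))
  have hyle : ∀ j, |y j| ≤ s := by
    intro j
    have : y j = ∑ k, S j k := by simp [hy, Matrix.mulVec, dotProduct]
    rw [this]
    calc |∑ k, S j k| ≤ ∑ k, |S j k| := Finset.abs_sum_le_sum_abs _ _
      _ ≤ s := Finset.le_sup' (fun i => ∑ k, |S i k|) (Finset.mem_univ j)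
  have hxle : ∀ j, |x j| ≤ s / d := by
    intro j
    have := varah_bound A d hgapA x s (by rw [hAx]; exact hyle) hdpos.le j
    rw [le_div_iff₀ hdpos]; linarith
  -- bound (S x) i
  have hSx : (S.mulVec x) i ≤ s * (s / d) := by
    have : (S.mulVec x) i = ∑ k, S i k * x k := rfl
    rw [this]
    calc ∑ k, S i k * x k ≤ ∑ k, |S i k| * (s / d) := by
          refine Finset.sum_le_sum fun k _ => ?_
          calc S i k * x k ≤ |S i k * x k| := le_abs_self _
            _ = |S i k| * |x k| := abs_mul _ _
            _ ≤ |S i k| * (s / d) := mul_le_mul_of_nonneg_left (hxle k) (abs_nonneg _)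
      _ = (∑ k, |S i k|) * (s / d) := (Finset.sum_mul _ _ _).symm
      _ ≤ s * (s / d) := by
          apply mul_le_mul_of_nonneg_right
            (Finset.le_sup' (fun i => ∑ k, |S i k|) (Finset.mem_univ i))
          positivity
  -- lower bounds for M1 and S1 rows
  have hM1 : δM ≤ (M.mulVec 1) i := by
    have h1 : (M.mulVec 1) i = M i i + ∑ j ∈ Finset.univ.erase i, M i j := by
      rw [Finset.add_sum_erase _ _ (Finset.mem_univ i)]
      simp [Matrix.mulVec, dotProduct]
    have h2 : -(∑ j ∈ Finset.univ.erase i, |M i j|) ≤ ∑ j ∈ Finset.univ.erase i, M i j := by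
      rw [← Finset.sum_neg_distrib]
      exact Finset.sum_le_sum fun j _ => neg_abs_le _
    have := hgapM i
    rw [h1]; linarith
  have hS1 : δS ≤ y i := by
    have h1 : y i = S i i + ∑ j ∈ Finset.univ.erase i, S i j := by
      rw [Finset.add_sum_erase _ _ (Finset.mem_univ i)]
      simp [hy, Matrix.mulVec, dotProduct]
    have h2 : -(∑ j ∈ Finset.univ.erase i, |S i j|) ≤ ∑ j ∈ Finset.univ.erase i, S i j := by
      rw [← Finset.sum_neg_distrib]
      exact Finset.sum_le_sum fun j _ => neg_abs_le _
    have := hgapS i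
    rw [h1]; linarith
  -- assemble
  have hexpand : ((M + (γR / 2) • S - (γR ^ 2 / 2) • (S * A⁻¹ * S)).mulVec 1) i
      = (M.mulVec 1) i + (γR / 2) * y i - (γR ^ 2 / 2) * (S.mulVec x) i := by
    rw [Matrix.sub_mulVec, Matrix.add_mulVec, Matrix.smul_mulVec,
      Matrix.smul_mulVec]
    have : (S * A⁻¹ * S).mulVec 1 = S.mulVec x := by
      rw [hx, hy, ← Matrix.mulVec_mulVec, ← Matrix.mulVec_mulVec]
    rw [this]
    simp [hy]
  rw [hexpand]
  have hcond' : γR ^ 2 * s ^ 2 / (2 * d) ≤ δM + (γR / 2) * δS := hcond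
  have hineq : (γR ^ 2 / 2) * (s * (s / d)) = γR ^ 2 * s ^ 2 / (2 * d) := by
    field_simp
  nlinarith [mul_le_mul_of_nonneg_left hSx (by positivity : (0:ℝ) ≤ γR ^ 2 / 2)]
end

section
/- Fix n ≥ 1, Σ ∈ ℝ^{n×n} symmetric positive definite, μ, γ ∈ ℝⁿ entrywise positive, γ_R > 0, k := (μᵀΣ⁻¹μ)⁻¹, and G := ∑_{j=1}^n γ_j⁻¹. Suppose that for every i ∈ {1,…,n}: −γ_R σ_i² + ∑_{m≠i} max(0, kμ_iμ_m/G − (γ_R + 1/G)σ_{im}) < (1/G)∑_{m≠i}(kμ_iμ_m − σ_{im}) < kμ_i²γ_i + (σ_i² − kμ_i²)/G − ∑_{m≠i} max(0, (γ_R + 1/G)σ_{im} − kμ_iμ_m/G). Define for p ∈ [0,1]ⁿ and each i: L_i(p) := ∑_{m=1}^n σ_{im}((1−p_m)/G − γ_R p_m) + kμ_i²γ_i(1−p_i) − (kμ_i/G)∑_{m=1}^n μ_m(1−p_m). Then for each i: L_i(p) < 0 whenever p_i = 1 and p ∈ [0,1]ⁿ, and L_i(p) > 0 whenever p_i = 0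 and p ∈ [0,1]ⁿ. -/
open Matrix BigOperators

lemma cmax_aux (c pm : ℝ) (h0 : 0 ≤ pm) (h1 : pm ≤ 1) : c * pm ≤ max 0 c := by
  rcases le_total c 0 with h | h
  · exact le_trans (mul_nonpos_of_nonpos_of_nonneg h h0) (le_max_left _ _)
  · calc c * pm ≤ c * 1 := by nlinarith
      _ = c := by ring
      _ ≤ max 0 c := le_max_right _ _

lemma cmin_aux (c pm : ℝ) (h0 : 0 ≤ pm) (h1 : pm ≤ 1) : -(max 0 (-c)) ≤ c * pm := by
  have := cmax_aux (-c) pm h0 h1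
  linarith

/-- The linear map `L_i(p)` from the Poincaré–Miranda argument. -/
noncomputable def paretoL {n : ℕ} (S : Matrix (Fin n) (Fin n) ℝ) (μ γ : Fin n → ℝ)
    (γR k G : ℝ) (i : Fin n) (p : Fin n → ℝ) : ℝ :=
  (∑ m, S i m * ((1 - p m) / G - γR * p m)) + k * (μ i) ^ 2 * γ i * (1 - p i)
    - (k * μ i / G) * ∑ m, μ m * (1 - p m)

theorem stmt14 {n : ℕ} (S : Matrix (Fin n) (Fin n) ℝ) (hS : S.PosDef)
    (μ γ : Fin n → ℝ) (hμ : ∀ i, 0 < μ i) (hγ : ∀ i, 0 < γ i)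
    (γR : ℝ) (hγR : 0 < γR) (k G : ℝ)
    (hk : k = (μ ⬝ᵥ S⁻¹.mulVec μ)⁻¹) (hG : G = ∑ j, (γ j)⁻¹)
    (hcond : ∀ i,
      (-γR * S i i
          + ∑ m ∈ Finset.univ.erase i, max 0 (k * μ i * μ m / G - (γR + 1 / G) * S i m)
        < (1 / G) * ∑ m ∈ Finset.univ.erase i, (k * μ i * μ m - S i m)) ∧
      ((1 / G) * ∑ m ∈ Finset.univ.erase i, (k * μ i * μ m - S i m)
        < k * (μ i) ^ 2 * γ i + (S i i - k * (μ i) ^ 2) / G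
          - ∑ m ∈ Finset.univ.erase i, max 0 ((γR + 1 / G) * S i m - k * μ i * μ m / G))) :
    ∀ i (p : Fin n → ℝ), (∀ m, p m ∈ Set.Icc (0 : ℝ) 1) →
      (p i = 1 → paretoL S μ γ γR k G i p < 0) ∧
      (p i = 0 → 0 < paretoL S μ γ γR k G i p) := by
  intro i p hp
  have e1 : (k * μ i / G) * ∑ m, μ m * (1 - p m)
      = ∑ m, k * μ i * μ m / G * (1 - p m) := by
    rw [Finset.mul_sum]
    exact Finset.sum_congr rfl fun m _ => by ring
  have hsum : paretoL S μ γ γR k G i p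
      = (∑ m, (S i m * ((1 - p m) / G - γR * p m) - k * μ i * μ m / G * (1 - p m)))
        + k * (μ i) ^ 2 * γ i * (1 - p i) := by
    unfold paretoL
    rw [e1, Finset.sum_sub_distrib]
    ring
  set g : Fin n → ℝ :=
    fun m => S i m * ((1 - p m) / G - γR * p m) - k * μ i * μ m / G * (1 - p m) with hgdef
  have hsplit : ∑ m, g m = g i + ∑ m ∈ Finset.univ.erase i, g m :=
    (Finset.add_sum_erase _ g (Finset.mem_univ i)).symm
  have h3 : (∑ m ∈ Finset.univ.erase i, (S i m - k * μ i * μ m) / G)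
      + (1 / G) * ∑ m ∈ Finset.univ.erase i, (k * μ i * μ m - S i m) = 0 := by
    rw [Finset.mul_sum, ← Finset.sum_add_distrib]
    exact Finset.sum_eq_zero fun m _ => by ring
  obtain ⟨hc1, hc2⟩ := hcond i
  constructor
  · intro hp1
    have hgi : g i = -γR * S i i := by
      rw [hgdef]; dsimp only; rw [hp1]; ring
    have hbound : ∀ m ∈ Finset.univ.erase i, g m
        ≤ (S i m - k * μ i * μ m) / G
          + max 0 (k * μ i * μ m / G - (γR + 1 / G) * S i m) := by
      intro m _
      have hm := cmax_aux (k * μ i * μ m / G - (γR + 1 / G) * S i m) (p m) (hp m).1 (hp m).2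
      have hge : g m = (S i m - k * μ i * μ m) / G
          + (k * μ i * μ m / G - (γR + 1 / G) * S i m) * p m := by
        rw [hgdef]; dsimp only; ring
      linarith
    have hsum_le := Finset.sum_le_sum hbound
    rw [Finset.sum_add_distrib] at hsum_le
    rw [hsum, hsplit, hgi, hp1]
    have hz : k * (μ i) ^ 2 * γ i * (1 - 1) = 0 := by ring
    linarith
  · intro hp0
    have hgi : g i = (S i i - k * (μ i) ^ 2) / G := by
      rw [hgdef]; dsimp only; rw [hp0]; ring
    have hbound : ∀ m ∈ Finset.univ.erase i,
        (S i m - k * μ i * μ m) / G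
          - max 0 ((γR + 1 / G) * S i m - k * μ i * μ m / G) ≤ g m := by
      intro m _
      have hm := cmin_aux (k * μ i * μ m / G - (γR + 1 / G) * S i m) (p m) (hp m).1 (hp m).2
      have hge : g m = (S i m - k * μ i * μ m) / G
          + (k * μ i * μ m / G - (γR + 1 / G) * S i m) * p m := by
        rw [hgdef]; dsimp only; ring
      have hneg : -(k * μ i * μ m / G - (γR + 1 / G) * S i m)
          = (γR + 1 / G) * S i m - k * μ i * μ m / G := by ring
      rw [hneg] at hm
      linarith
    have hsum_le := Finset.sum_le_sum hbound
    rw [Finset.sum_sub_distrib] at hsum_le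
    rw [hsum, hsplit, hgi, hp0]
    have hz : k * (μ i) ^ 2 * γ i * (1 - 0) = k * (μ i) ^ 2 * γ i := by ring
    linarith
end

section
/- Let Σ ∈ ℝ^{n×n} be symmetric positive definite, μ ∈ ℝⁿ, γ ∈ ℝⁿ entrywise positive, p ∈ ℝⁿ, k := (μᵀΣ⁻¹μ)⁻¹, and G := ∑_{j=1}^n γ_j⁻¹. For each i, define the row vector A_i := (γ_i⁻¹/G)·1ᵀD(1−p) + k(α_i − ᾱ_i) μᵀΣ⁻¹, where α_i := (1−p_i)μ_i, ᾱ_i := (γ_i⁻¹/G)∑_{j=1}^n(1−p_j)μ_j, and D(·) is the diagonal-matrix operator. Then A_i Σ A_iᵀ = (γ_i⁻¹/G)² ∑_{j,l=1}^n (1−p_j)(1−p_l)σ_{jl} + k(α_i² − ᾱ_i²). -/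
open Matrix BigOperators

theorem stmt15 {n : ℕ} (S : Matrix (Fin n) (Fin n) ℝ) (hS : S.PosDef)
    (μ γ p : Fin n → ℝ) (hμ : μ ≠ 0) (hγ : ∀ i, 0 < γ i) (k G : ℝ) (hkpos : 0 < k)
    (hk : k = (μ ⬝ᵥ S⁻¹.mulVec μ)⁻¹) (hG : G = ∑ j, (γ j)⁻¹) (i : Fin n) :
    (fun j => (γ i)⁻¹ / G * (1 - p j)
        + k * ((1 - p i) * μ i - (γ i)⁻¹ / G * ∑ l, (1 - p l) * μ l)
          * Matrix.vecMul μ S⁻¹ j)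
      ⬝ᵥ S.mulVec (fun j => (γ i)⁻¹ / G * (1 - p j)
        + k * ((1 - p i) * μ i - (γ i)⁻¹ / G * ∑ l, (1 - p l) * μ l)
          * Matrix.vecMul μ S⁻¹ j)
    = ((γ i)⁻¹ / G) ^ 2 * ∑ j, ∑ l, (1 - p j) * (1 - p l) * S j l
      + k * (((1 - p i) * μ i) ^ 2 - ((γ i)⁻¹ / G * ∑ l, (1 - p l) * μ l) ^ 2) := by
  have hdet : IsUnit S.det := isUnit_iff_ne_zero.mpr hS.det_pos.ne'
  have hsymm : Sᵀ = S := hS.isHermitian.eq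
  set c : ℝ := (γ i)⁻¹ / G with hc
  set b : ℝ := k * ((1 - p i) * μ i - c * ∑ l, (1 - p l) * μ l) with hb
  set u : Fin n → ℝ := fun j => 1 - p j with hu
  set v : Fin n → ℝ := Matrix.vecMul μ S⁻¹ with hv
  have hvS : Matrix.vecMul v S = μ := by
    rw [hv, Matrix.vecMul_vecMul, Matrix.nonsing_inv_mul S hdet, Matrix.vecMul_one]
  have hSv : S.mulVec v = μ := by
    have : v = S⁻¹.mulVec μ := by
      rw [hv, ← Matrix.mulVec_transpose, Matrix.transpose_nonsing_inv, hsymm]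
    rw [this, Matrix.mulVec_mulVec, Matrix.mul_nonsing_inv S hdet, Matrix.one_mulVec]
  have hkinv : μ ⬝ᵥ S⁻¹.mulVec μ = k⁻¹ := by
    have hne : μ ⬝ᵥ S⁻¹.mulVec μ ≠ 0 := by
      intro h
      rw [h, _root_.inv_zero] at hk
      exact hkpos.ne' hk
    simp [hk]
  have hvv : v ⬝ᵥ S.mulVec v = k⁻¹ := by
    rw [hSv, hv, ← hkinv, ← Matrix.dotProduct_mulVec]
  have huv : u ⬝ᵥ S.mulVec v = ∑ l, (1 - p l) * μ l := by
    rw [hSv]; rfl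
  have hvu : v ⬝ᵥ S.mulVec u = ∑ l, (1 - p l) * μ l := by
    rw [Matrix.dotProduct_mulVec, hvS]
    simp [dotProduct, hu, mul_comm]
  have huu : u ⬝ᵥ S.mulVec u = ∑ j, ∑ l, (1 - p j) * (1 - p l) * S j l := by
    simp [dotProduct, Matrix.mulVec, Finset.mul_sum, hu]
    congr 1; funext j; congr 1; funext l; ring
  have hA : (fun j => c * (1 - p j) + b * v j) = fun j => c * u j + b * v j := rfl
  show (fun j => c * u j + b * v j) ⬝ᵥ S.mulVec (fun j => c * u j + b * v j)
      = c ^ 2 * ∑ j, ∑ l, (1 - p j) * (1 - p l) * S j l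
        + k * (((1 - p i) * μ i) ^ 2 - (c * ∑ l, (1 - p l) * μ l) ^ 2)
  have hfun : (fun j => c * u j + b * v j) = c • u + b • v := by
    funext j; simp [smul_eq_mul]
  rw [hfun]
  simp only [add_dotProduct, Matrix.mulVec_add, Matrix.mulVec_smul,
    dotProduct_add, smul_dotProduct, dotProduct_smul,
    smul_eq_mul]
  rw [huu, huv, hvu, hvv]
  simp only [hb]
  field_simp
  ring
end

section
/- Let M be a symmetric positive definite n×n real matrix and Σ symmetric positive semidefinite, μ ∈ ℝⁿ entrywise positive, γ_R ≥ 0. Define η* by D(μ)η* := M(γ_R Σ + 2M)⁻¹(γ_R Σ + M)1, and p* := 1 − M⁻¹D(μ)η*. Then the reinsurer's welfare gain ω_R := (D(μ)η*)ᵀ p* − (γ_R/2)(p*)ᵀ Σ p* equals (1/2)·1ᵀ(γ_R M⁻¹ΣM⁻¹ + 2M⁻¹)⁻¹ 1. -/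
/-!
Put `A = γ_R Σ + 2M` and `q = A⁻¹M1`. Then `p* = q` and `D(μ)η* = (A - M)q`, so the welfare is
`qᵀ(γ_R Σ + M)q - (γ_R/2)qᵀΣq = ½ qᵀAq = ½ 1ᵀMq = ½ 1ᵀ(MA⁻¹M)1`,
and `MA⁻¹M` is the inverse of `M⁻¹AM⁻¹ = γ_R M⁻¹ΣM⁻¹ + 2M⁻¹`.
-/

open Matrix

namespace Matrix

variable {n R : Type*} [Fintype n] [CommRing R]

theorem two_mul_add_mulVec_dotProduct_sub (T M : Matrix n n R) (hM : Mᵀ = M) {q v : n → R}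
    (hq : (T + (2 : R) • M) *ᵥ q = M *ᵥ v) :
    2 * ((T + M) *ᵥ q ⬝ᵥ q) - q ⬝ᵥ T *ᵥ q = v ⬝ᵥ M *ᵥ q := by
  have hquad : q ⬝ᵥ (T + (2 : R) • M) *ᵥ q = 2 * ((T + M) *ᵥ q ⬝ᵥ q) - q ⬝ᵥ T *ᵥ q := by
    rw [dotProduct_comm _ q]
    simp only [add_mulVec, smul_mulVec, dotProduct_add, dotProduct_smul, smul_eq_mul]
    ring
  rw [← hquad, hq, dotProduct_mulVec, ← mulVec_transpose, hM, dotProduct_comm]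

variable [DecidableEq n]

theorem inv_inv_mul_mul_inv (M A : Matrix n n R) (hM : IsUnit M.det) :
    (M⁻¹ * A * M⁻¹)⁻¹ = M * A⁻¹ * M := by
  rw [mul_inv_rev, mul_inv_rev, nonsing_inv_nonsing_inv M hM, Matrix.mul_assoc]

theorem mul_inv_mul_sub_comm (M A : Matrix n n R) (hA : IsUnit A.det) :
    M * A⁻¹ * (A - M) = (A - M) * A⁻¹ * M := by
  rw [Matrix.mul_sub, Matrix.sub_mul, Matrix.sub_mul, Matrix.mul_assoc M A⁻¹ A,
    nonsing_inv_mul A hA, mul_nonsing_inv A hA, Matrix.mul_one, Matrix.one_mul]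

end Matrix

theorem stmt16_general {n : ℕ} (M S : Matrix (Fin n) (Fin n) ℝ) (hM : M.PosDef) (hS : S.PosSemidef)
    (μ : Fin n → ℝ) (γR : ℝ) (hγR : 0 ≤ γR)
    (η p : Fin n → ℝ)
    (hη : (Matrix.diagonal μ).mulVec η =
      (M * (γR • S + (2 : ℝ) • M)⁻¹ * (γR • S + M)).mulVec 1)
    (hp : p = 1 - M⁻¹.mulVec ((Matrix.diagonal μ).mulVec η)) :
    (Matrix.diagonal μ).mulVec η ⬝ᵥ p - (γR / 2) * (p ⬝ᵥ S.mulVec p)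
      = (1 / 2 : ℝ) *
        ((1 : Fin n → ℝ) ⬝ᵥ ((γR • (M⁻¹ * S * M⁻¹) + (2 : ℝ) • M⁻¹)⁻¹.mulVec 1)) := by
  set A := γR • S + (2 : ℝ) • M with hA_def
  have hA : IsUnit A.det :=
    (isUnit_iff_isUnit_det A).mp (PosDef.posSemidef_add (hS.smul hγR) (hM.smul two_pos)).isUnit
  have hMdet : IsUnit M.det := (isUnit_iff_isUnit_det M).mp hM.isUnit
  have hB : γR • S + M = A - M := by rw [hA_def]; module
  set q := A⁻¹ *ᵥ (M *ᵥ 1)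
  have hAq : A *ᵥ q = M *ᵥ 1 := by
    rw [mulVec_mulVec, mul_nonsing_inv A hA, one_mulVec]
  have hp_eq : p = q := by
    rw [hp, hη, mulVec_mulVec, ← Matrix.mul_assoc, ← Matrix.mul_assoc, nonsing_inv_mul M hMdet,
      Matrix.one_mul, hB, Matrix.mul_sub, nonsing_inv_mul A hA, sub_mulVec, one_mulVec,
      sub_sub_cancel, ← mulVec_mulVec]
  have hDη : diagonal μ *ᵥ η = (γR • S + M) *ᵥ q := by
    rw [hη, hB, mul_inv_mul_sub_comm M A hA, mulVec_mulVec, mulVec_mulVec, Matrix.mul_assoc]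
  have hinv : (γR • (M⁻¹ * S * M⁻¹) + (2 : ℝ) • M⁻¹)⁻¹ = M * A⁻¹ * M := by
    rw [← inv_inv_mul_mul_inv M A hMdet, hA_def, Matrix.mul_add, Matrix.add_mul,
      Matrix.mul_smul, Matrix.smul_mul, Matrix.mul_smul, Matrix.smul_mul,
      Matrix.mul_assoc M⁻¹ M, mul_nonsing_inv M hMdet, Matrix.mul_one]
  have hquad := two_mul_add_mulVec_dotProduct_sub (γR • S) M hM.1 hAq
  rw [hDη, hp_eq, hinv, ← mulVec_mulVec, ← mulVec_mulVec, ← hquad]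
  simp only [smul_mulVec, dotProduct_smul, smul_eq_mul]
  ring

theorem stmt16 {n : ℕ} (M S : Matrix (Fin n) (Fin n) ℝ) (hM : M.PosDef) (hS : S.PosSemidef)
    (μ : Fin n → ℝ) (hμ : ∀ i, 0 < μ i) (γR : ℝ) (hγR : 0 ≤ γR)
    (η p : Fin n → ℝ)
    (hη : (Matrix.diagonal μ).mulVec η =
      (M * (γR • S + (2 : ℝ) • M)⁻¹ * (γR • S + M)).mulVec 1)
    (hp : p = 1 - M⁻¹.mulVec ((Matrix.diagonal μ).mulVec η)) :
    (Matrix.diagonal μ).mulVec η ⬝ᵥ p - (γR / 2) * (p ⬝ᵥ S.mulVec p)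
      = (1 / 2 : ℝ) *
        ((1 : Fin n → ℝ) ⬝ᵥ ((γR • (M⁻¹ * S * M⁻¹) + (2 : ℝ) • M⁻¹)⁻¹.mulVec 1)) :=
  stmt16_general M S hM hS μ γR hγR η p hη hp
end
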